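/- Let K be a field, E a finite linearly ordered set, W ⊆ K^E a realization of a matroid M of rank r, and 0 ≠ φ ∈ W^∨ a linear functional on W with lift φ̃ = (φ̃_e)_{e∈E} ∈ (K^E)^∨ (so φ̃ restricts to φ on W). Let W_φ := ker φ ⊆ K^E be the elementary quotient configuration. Fix a basis w = (w^1,…,w^r) of W and for T ⊆ E with |T| = r let det α_{W,T} denote the determinant of the matrix (w^i_e)_{1≤i≤r, e∈T} with columns ordered by the linear order on E. Then, up to a nonzero square constant factor, ψ_{W_φ} = Σ_{S ⊆ E, |S| = r−1} ( Σ_{e ∉ S} (−1)^{|{s ∈ S : s < e}|} · φ̃_e · det α_{W,S∪{e}} )² · x^S. -/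

import Mathlib

open scoped BigOperators

namespace Config

variable {K : Type} [Field K] {E : Type} [Fintype E] [LinearOrder E]

/-- `w` is a (linear) basis of the configuration `W ⊆ K^E`. -/
def IsBasisOf {r : ℕ} (w : Fin r → E → K) (W : Submodule K (E → K)) : Prop :=
  LinearIndependent K w ∧ Submodule.span K (Set.range w) = W

/-- The coefficient `c_{W,B} = (det (w^i_e)_{1≤i≤r, e∈B})²`, the squared determinant of
the `r × r` submatrix of the coefficient matrix of `w` with column set `B` (the square
is independent of the chosen ordering of the columns). -/
noncomputable def cSq {r : ℕ} (w : Fin r → E → K) (B : Finset E) : K :=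
  if h : B.card = r then
    (Matrix.det (Matrix.of fun i j : Fin r =>
      w i ((Finset.equivFinOfCardEq h).symm j : E))) ^ 2
  else 0

/-- The configuration polynomial `ψ_W = ∑_B c_{W,B} · x^B` computed from the basis `w`
(the coefficient `c_{W,B}` vanishes unless `B` is a basis of the matroid `M_W`). -/
noncomputable def psi {r : ℕ} (w : Fin r → E → K) : MvPolynomial E K :=
  ∑ B ∈ Finset.univ.powersetCard r,
    MvPolynomial.C (cSq w B) * ∏ e ∈ B, MvPolynomial.X e

/-- The linear functional `v ↦ ∑_e u_e v_e` on `K^E`. -/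
noncomputable def dotFun (u : E → K) : (E → K) →ₗ[K] K :=
  ∑ e : E, u e • LinearMap.proj e

/-- The determinant `det α_{W,T}` of the `r × r` submatrix of the coefficient matrix of `w`
with columns `T`, ordered by the linear order on `E` (and `0` if `|T| ≠ r`). -/
noncomputable def detSub {r : ℕ} (w : Fin r → E → K) (T : Finset E) : K :=
  if h : T.card = r then
    Matrix.det (Matrix.of fun i j : Fin r => w i ((T.orderIsoOfFin h j : T) : E))
  else 0

end Config

/-!
Choose `v ∈ W` with `φ v ≠ 0`; then `(v, wq)` is a basis of `W`. For `|S| = r - 1` and a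
basis `u` of `W`, consider the `r × r` matrix whose `i`-th row is `(φ̃ u_i, u_i restricted to S)`.
Its rows are a linear image of the basis, so passing from one basis to another multiplies its
determinant by the determinant of the change of basis, a nonzero constant independent of `S`.
For `u = w`, expanding the first column `φ̃ w_i = ∑_e φ̃_e w^i_e` gives
`∑_{e ∉ S} ± φ̃_e det α_{W,S∪{e}}`, the sign being that of the cycle moving `e` to its place in
`S ∪ {e}`. For `u = (v, wq)` the first column is `(φ v, 0, …, 0)`, so the determinant is
`φ v · det α_{W_φ,S}`. Squaring compares the coefficients of `ψ_{W_φ}`.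
-/

namespace Fin
variable {α : Type*} [LinearOrder α]

theorem strictMono_insertNth_of_lt_iff {n : ℕ} {f : Fin n → α} (hf : StrictMono f)
    {p : Fin (n + 1)} {x : α} (hlt : ∀ j, f j < x ↔ j.castSucc < p) (hne : ∀ j, f j ≠ x) :
    StrictMono (p.insertNth x f) := by
  intro a b hab
  rcases p.eq_self_or_eq_succAbove a with rfl | ⟨a, rfl⟩
  · rcases a.eq_self_or_eq_succAbove b with rfl | ⟨b, rfl⟩
    · exact absurd hab (lt_irrefl _)
    · rw [lt_succAbove_iff_le_castSucc] at hab
      simpa using lt_of_le_of_ne (not_lt.1 fun h => not_lt.2 hab ((hlt b).1 h)) (hne b).symm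
  · rcases p.eq_self_or_eq_succAbove b with rfl | ⟨b, rfl⟩
    · rw [succAbove_lt_iff_castSucc_lt] at hab
      simpa using (hlt a).2 hab
    · simpa using hf (succAbove_lt_succAbove_iff.1 hab)

end Fin

namespace Finset
variable {α : Type*} [LinearOrder α]

theorem card_filter_lt_orderEmbOfFin (s : Finset α) {k : ℕ} (h : s.card = k) (i : Fin k) :
    (s.filter (· < s.orderEmbOfFin h i)).card = i := by
  have : s.filter (· < s.orderEmbOfFin h i) = (Iio i).map (s.orderEmbOfFin h).toEmbedding := by
    ext x
    simp only [mem_filter, mem_map, mem_Iio, RelEmbedding.coe_toEmbedding]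
    constructor
    · rintro ⟨hx, hxi⟩
      obtain ⟨j, rfl⟩ : x ∈ Set.range (s.orderEmbOfFin h) := by rwa [range_orderEmbOfFin]
      exact ⟨j, (s.orderEmbOfFin h).lt_iff_lt.1 hxi, rfl⟩
    · rintro ⟨j, hj, rfl⟩
      exact ⟨s.orderEmbOfFin_mem h j, (s.orderEmbOfFin h).lt_iff_lt.2 hj⟩
  rw [this, card_map, Fin.card_Iio]

theorem orderEmbOfFin_lt_iff (s : Finset α) {k : ℕ} (h : s.card = k) (i : Fin k) (a : α) :
    s.orderEmbOfFin h i < a ↔ (i : ℕ) < (s.filter (· < a)).card := by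
  rw [← s.card_filter_lt_orderEmbOfFin h i]
  constructor
  · intro hlt
    refine card_lt_card ⟨fun x hx => ?_, fun hsub => ?_⟩
    · exact mem_filter.2 ⟨(mem_filter.1 hx).1, (mem_filter.1 hx).2.trans hlt⟩
    · exact lt_irrefl _ (mem_filter.1 (hsub (mem_filter.2 ⟨s.orderEmbOfFin_mem h i, hlt⟩))).2
  · intro hcard
    by_contra hle
    refine (card_le_card fun x hx => ?_).not_gt hcard
    exact mem_filter.2 ⟨(mem_filter.1 hx).1, (mem_filter.1 hx).2.trans_le (not_lt.1 hle)⟩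

theorem orderEmbOfFin_insert {s : Finset α} {k : ℕ} (h : s.card = k) {a : α} (ha : a ∉ s)
    (h' : (insert a s).card = k + 1) {p : Fin (k + 1)} (hp : (p : ℕ) = (s.filter (· < a)).card) :
    ⇑((insert a s).orderEmbOfFin h') = p.insertNth a (s.orderEmbOfFin h) := by
  refine (orderEmbOfFin_unique h' ((Fin.forall_iff_succAbove p).2 ⟨?_, fun j => ?_⟩) ?_).symm
  · simp
  · simp [s.orderEmbOfFin_mem h j]
  · refine Fin.strictMono_insertNth_of_lt_iff (s.orderEmbOfFin h).strictMono (fun j => ?_)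
      (fun j hj => ha (hj ▸ s.orderEmbOfFin_mem h j))
    rw [s.orderEmbOfFin_lt_iff h, Fin.lt_def, Fin.val_castSucc, hp]

end Finset

theorem Module.Basis.det_of_linearMap_comp {R V ι : Type*} [CommRing R] [AddCommGroup V]
    [Module R V] [Fintype ι] [DecidableEq ι] (ρ : V →ₗ[R] ι → R) (b b' : Basis ι R V) :
    (Matrix.of fun i => ρ (b' i)).det = b.det b' * (Matrix.of fun i => ρ (b i)).det := by
  have := congr($((Matrix.detRowAlternating.compLinearMap ρ).eq_smul_basis_det b) b')
  simp only [AlternatingMap.compLinearMap_apply, AlternatingMap.smul_apply, smul_eq_mul,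
    mul_comm] at this
  exact this

theorem Matrix.det_of_cons_sum {R ι : Type*} [CommRing R] {n : ℕ} (s : Finset ι) (c : ι → R)
    (x : ι → Fin (n + 1) → R) (g : Fin (n + 1) → Fin n → R) :
    (Matrix.of fun i => (Fin.cons (∑ a ∈ s, c a * x a i) (g i) : Fin (n + 1) → R)).det =
      ∑ a ∈ s, c a * (Matrix.of fun i => (Fin.cons (x a i) (g i) : Fin (n + 1) → R)).det := by
  simp only [Matrix.det_succ_column_zero, Matrix.submatrix, Matrix.of_apply, Fin.cons_zero,
    Fin.cons_succ, Finset.mul_sum, Finset.sum_mul]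
  rw [Finset.sum_comm]
  refine Finset.sum_congr rfl fun i _ => Finset.sum_congr rfl fun a _ => by ring

namespace Config

variable {K : Type} [Field K] {E : Type}

section Bases

variable {r : ℕ} {W : Submodule K (E → K)}

theorem IsBasisOf.mem {w : Fin r → E → K} (hw : IsBasisOf w W) (i : Fin r) : w i ∈ W :=
  hw.2 ▸ Submodule.subset_span ⟨i, rfl⟩

theorem IsBasisOf.of_linearIndependent {w u : Fin r → E → K} (hw : IsBasisOf w W)
    (hu : LinearIndependent K u) (hmem : ∀ i, u i ∈ W) : IsBasisOf u W := by
  have : FiniteDimensional K W := hw.2 ▸ FiniteDimensional.span_of_finite K (Set.finite_range w)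
  refine ⟨hu, Submodule.eq_of_le_of_finrank_eq ?_ ?_⟩
  · exact Submodule.span_le.2 (Set.range_subset_iff.2 hmem)
  · rw [finrank_span_eq_card hu, ← hw.2, finrank_span_eq_card hw.1]

theorem IsBasisOf.fin_cons {m : ℕ} {w : Fin (m + 1) → E → K} (hw : IsBasisOf w W)
    {wq : Fin m → E → K} {f : (E → K) →ₗ[K] K} (hwq : IsBasisOf wq (W ⊓ LinearMap.ker f))
    {v : E → K} (hv : v ∈ W) (hfv : f v ≠ 0) :
    IsBasisOf (Fin.cons v wq : Fin (m + 1) → E → K) W := by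
  refine hw.of_linearIndependent ?_ (Fin.cases hv fun i => (hwq.mem i).1)
  refine linearIndependent_finCons.2 ⟨hwq.1, fun hspan => hfv ?_⟩
  rw [hwq.2] at hspan
  exact hspan.2

noncomputable def IsBasisOf.basis {w : Fin r → E → K} (hw : IsBasisOf w W) :
    Module.Basis (Fin r) K W :=
  (Module.Basis.span hw.1).map (LinearEquiv.ofEq _ _ hw.2)

@[simp]
theorem IsBasisOf.coe_basis_apply {w : Fin r → E → K} (hw : IsBasisOf w W) (i : Fin r) :
    (hw.basis i : E → K) = w i := by
  simp [IsBasisOf.basis, Module.Basis.span_apply]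

theorem IsBasisOf.exists_det_eq_mul {w u : Fin r → E → K} (hw : IsBasisOf w W)
    (hu : IsBasisOf u W) : ∃ c : K, c ≠ 0 ∧ ∀ ρ : (E → K) →ₗ[K] Fin r → K,
      (Matrix.of fun i => ρ (w i)).det = c * (Matrix.of fun i => ρ (u i)).det := by
  refine ⟨hu.basis.det hw.basis, (hu.basis.isUnit_det hw.basis).ne_zero, fun ρ => ?_⟩
  simpa using hu.basis.det_of_linearMap_comp (ρ ∘ₗ W.subtype) hw.basis

end Bases

theorem dotFun_apply [Fintype E] (u v : E → K) : dotFun u v = ∑ e, u e * v e := by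
  simp [dotFun]

section Minors

variable [LinearOrder E]

theorem detSub_of_card_eq {r : ℕ} (w : Fin r → E → K) {T : Finset E} (hT : T.card = r) :
    detSub w T = (Matrix.of fun i j => w i (T.orderEmbOfFin hT j)).det := by
  simp [detSub, hT]

theorem cSq_eq_detSub_sq {r : ℕ} (w : Fin r → E → K) (B : Finset E) :
    cSq w B = detSub w B ^ 2 := by
  by_cases hB : B.card = r
  · let σ : Equiv.Perm (Fin r) := (B.equivFinOfCardEq hB).symm.trans (B.orderIsoOfFin hB).symm
    have : (Matrix.of fun i j => w i ((B.equivFinOfCardEq hB).symm j : E)) =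
        (Matrix.of fun i j => w i (B.orderEmbOfFin hB j)).submatrix id σ := by
      ext i j
      simp [σ, ← Finset.coe_orderIsoOfFin_apply]
    rw [cSq, dif_pos hB, this, Matrix.det_permute', detSub_of_card_eq w hB, mul_pow,
      ← Int.cast_pow, ← Units.val_pow_eq_pow_val, Int.units_sq, Units.val_one, Int.cast_one,
      one_mul]
  · simp [cSq, detSub, hB]

noncomputable def consRestrict (f : (E → K) →ₗ[K] K) {m : ℕ} (S : Finset E) (hS : S.card = m) :
    (E → K) →ₗ[K] Fin (m + 1) → K :=
  LinearMap.pi (Fin.cons f fun j => LinearMap.proj (S.orderEmbOfFin hS j))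

@[simp]
theorem consRestrict_apply (f : (E → K) →ₗ[K] K) {m : ℕ} (S : Finset E) (hS : S.card = m)
    (v : E → K) : consRestrict f S hS v = Fin.cons (f v) fun j => v (S.orderEmbOfFin hS j) := by
  ext j
  cases j using Fin.cases <;> simp [consRestrict]

theorem consRestrict_proj {m : ℕ} (S : Finset E) (hS : S.card = m) (e : E) (v : E → K) :
    consRestrict (LinearMap.proj e) S hS v =
      fun j => v ((Fin.cons e (S.orderEmbOfFin hS) : Fin (m + 1) → E) j) := by
  ext j
  cases j using Fin.cases <;> simp

theorem det_consRestrict_proj_of_mem {m : ℕ} (w : Fin (m + 1) → E → K) {S : Finset E}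
    (hS : S.card = m) {e : E} (he : e ∈ S) :
    (Matrix.of fun i => consRestrict (LinearMap.proj e) S hS (w i)).det = 0 := by
  obtain ⟨j, rfl⟩ : e ∈ Set.range (S.orderEmbOfFin hS) := by rwa [Finset.range_orderEmbOfFin]
  exact Matrix.det_zero_of_column_eq (Fin.succ_ne_zero j).symm fun i => by simp

theorem det_consRestrict_proj_of_notMem {m : ℕ} (w : Fin (m + 1) → E → K) {S : Finset E}
    (hS : S.card = m) {e : E} (he : e ∉ S) :
    (Matrix.of fun i => consRestrict (LinearMap.proj e) S hS (w i)).det =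
      (-1) ^ (S.filter (· < e)).card * detSub w (insert e S) := by
  have hcard : (insert e S).card = m + 1 := by rw [Finset.card_insert_of_notMem he, hS]
  set p : Fin (m + 1) :=
    ⟨(S.filter (· < e)).card, Nat.lt_succ_of_le (hS ▸ Finset.card_filter_le _ _)⟩
  have hsub : (Matrix.of fun i j => w i ((insert e S).orderEmbOfFin hcard j)) =
      (Matrix.of fun i => consRestrict (LinearMap.proj e) S hS (w i)).submatrix id
        p.cycleRange := by
    ext i j
    simp only [Matrix.of_apply, Matrix.submatrix_apply, id, consRestrict_proj]
    rw [Finset.orderEmbOfFin_insert hS he hcard (p := p) rfl, ← Fin.cons_comp_cycleRange]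
    rfl
  rw [detSub_of_card_eq w hcard, hsub, Matrix.det_permute', Fin.sign_cycleRange, ← mul_assoc]
  simp [p, ← pow_add, ← two_mul, pow_mul]

theorem det_consRestrict_cons_of_ker (f : (E → K) →ₗ[K] K) {m : ℕ} {S : Finset E}
    (hS : S.card = m) (v : E → K) {wq : Fin m → E → K} (hwq : ∀ i, f (wq i) = 0) :
    (Matrix.of fun i => consRestrict f S hS ((Fin.cons v wq : Fin (m + 1) → E → K) i)).det =
      f v * detSub wq S := by
  rw [Matrix.det_succ_column_zero, Fin.sum_univ_succ, detSub_of_card_eq wq hS]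
  simp [hwq, Matrix.submatrix]

theorem det_consRestrict_dotFun [Fintype E] (φt : E → K) {m : ℕ} (w : Fin (m + 1) → E → K)
    {S : Finset E} (hS : S.card = m) :
    (Matrix.of fun i => consRestrict (dotFun φt) S hS (w i)).det =
      ∑ e ∈ Sᶜ, (-1 : K) ^ (S.filter (· < e)).card * φt e * detSub w (insert e S) := by
  have hlin : (Matrix.of fun i => consRestrict (dotFun φt) S hS (w i)).det =
      ∑ e, φt e * (Matrix.of fun i => consRestrict (LinearMap.proj e) S hS (w i)).det := by
    simp only [consRestrict_apply, dotFun_apply, LinearMap.coe_proj, Function.eval]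
    exact Matrix.det_of_cons_sum _ _ (fun e i => w i e) _
  rw [hlin, ← Finset.sum_subset (Finset.subset_univ Sᶜ) fun e _ he => by
    rw [det_consRestrict_proj_of_mem w hS (by simpa using he), mul_zero]]
  refine Finset.sum_congr rfl fun e he => ?_
  rw [det_consRestrict_proj_of_notMem w hS (by simpa using he)]
  ring

end Minors

variable [Fintype E] [LinearOrder E]

/-- **Theorem (Configuration polynomials of elementary quotients).**
Let `W ⊆ K^E` realize a matroid of rank `r`, let `φ ≠ 0` be a functional on `W` with
lift `φ̃ ∈ (K^E)^∨`, and let `W_φ = ker φ`.  Then, up to a nonzero square constant factor,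
`ψ_{W_φ} = ∑_{|S| = r−1} (∑_{e ∉ S} ±φ̃_e · det α_{W,S∪{e}})² · x^S`, with the sign
`(−1)^{|{s ∈ S : s < e}|}` determined by Laplace expansion. -/
theorem psi_elementary_quotient
    (W : Submodule K (E → K)) {r : ℕ} (w : Fin r → E → K) (hw : IsBasisOf w W)
    (φt : E → K) (hφ : ∃ v ∈ W, dotFun φt v ≠ 0)
    (wq : Fin (r - 1) → E → K)
    (hwq : IsBasisOf wq (W ⊓ LinearMap.ker (dotFun φt))) :
    ∃ c : K, c ≠ 0 ∧
      psi wq = MvPolynomial.C (c ^ 2) *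
        ∑ S ∈ Finset.univ.powersetCard (r - 1),
          MvPolynomial.C
            ((∑ e ∈ Sᶜ,
              (-1 : K) ^ (S.filter (fun s => s < e)).card * φt e *
                detSub w (insert e S)) ^ 2) *
          ∏ e ∈ S, MvPolynomial.X e := by
  obtain ⟨v, hvW, hφv⟩ := hφ
  obtain _ | m := r
  · have hW : W = ⊥ := by rw [← hw.2, Set.range_eq_empty, Submodule.span_empty]
    simp only [hW, Submodule.mem_bot] at hvW
    simp [hvW] at hφv
  obtain ⟨c, hc, hdet⟩ := hw.exists_det_eq_mul (hw.fin_cons hwq hvW hφv)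
  have hminor : ∀ (S : Finset E) (hS : S.card = m),
      ∑ e ∈ Sᶜ, (-1 : K) ^ (S.filter (· < e)).card * φt e * detSub w (insert e S) =
        c * dotFun φt v * detSub wq S := fun S hS => by
    rw [← det_consRestrict_dotFun φt w hS, hdet,
      det_consRestrict_cons_of_ker _ hS v fun i => (hwq.mem i).2, mul_assoc]
  refine ⟨(c * dotFun φt v)⁻¹, inv_ne_zero (mul_ne_zero hc hφv), ?_⟩
  rw [psi, Finset.mul_sum]
  refine Finset.sum_congr rfl fun S hS => ?_
  rw [hminor S (Finset.mem_powersetCard.1 hS).2, cSq_eq_detSub_sq, ← mul_assoc,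
    ← MvPolynomial.C_mul]
  congr 2
  field_simp

end Config
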